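/- Let (A, χ) be a C*-algebra with character, π : A → B(h) a *-homomorphism, ξ ∈ h, and for 0 < h with h‖ξ‖² ≤ 1 let U = U_ξ^{(h)} be the unitary above and ψ^{(h)}(a) := U* (χ(a) ⊕ π(a)) U. With ν = π − χ(·)I_h, γ = ω_ξ ∘ ν, X = |ξ⟩⟨ξ|, φ the implemented block map [[γ, ⟨ξ|ν(·)],[ν(·)|ξ⟩, ν]], φ₁ = [[0, γ(·)⟨ξ|],[γ(·)|ξ⟩, Xν(·)+ν(·)X]], and φ₂ = γ(·)(0 ⊕ X), one has the exact identity: φ − Σ_h(ψ^{(h)} − χ(·)I_{ℂ⊕h}) = (h/(1+c_h)) φ₁ − (h²/(1+c_h)²) φ₂, where Σ_h is conjugation by the scaling operator S_h = h^{−1/2} ⊕ I_h and c_h = √(1 − h‖ξ‖²). -/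

import Mathlib

noncomputable section
open ContinuousLinearMap

/-- The Hilbert space `ĥ = ℂ ⊕ h` (with the `ℓ²` direct sum norm). -/
abbrev hilHat (h : Type*) [NormedAddCommGroup h] [InnerProductSpace ℂ h] :=
  WithLp 2 (ℂ × h)

/-- Block operator `[[a, r],[cv, d]]` on `ℂ ⊕ h`. -/
def blk {h : Type*} [NormedAddCommGroup h] [InnerProductSpace ℂ h]
    (a : ℂ) (r : h →L[ℂ] ℂ) (cv : ℂ →L[ℂ] h) (d : h →L[ℂ] h) :
    hilHat h →L[ℂ] hilHat h :=
  let e := WithLp.prodContinuousLinearEquiv 2 ℂ ℂ h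
  (e.symm : ℂ × h →L[ℂ] hilHat h) ∘L
    (((a • ContinuousLinearMap.fst ℂ ℂ h + r ∘L ContinuousLinearMap.snd ℂ ℂ h).prod
      (cv ∘L ContinuousLinearMap.fst ℂ ℂ h + d ∘L ContinuousLinearMap.snd ℂ ℂ h))) ∘L
    (e : hilHat h →L[ℂ] ℂ × h)

variable {h : Type*} [NormedAddCommGroup h] [InnerProductSpace ℂ h] [CompleteSpace h]

/-- The normalisation `ξ' = ξ/‖ξ‖` (equal to `0` when `ξ = 0`). -/
def xiNorm (ξ : h) : h := (‖ξ‖⁻¹ : ℝ) • ξ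

/-- The projection `Q_ξ = |ξ'⟩⟨ξ'|` onto `ℂξ`. -/
def Qproj (ξ : h) : h →L[ℂ] h := (innerSL ℂ (xiNorm ξ)).smulRight (xiNorm ξ)

/-- The block unitary `U_ξ^{(t)} = [[c, −s*],[s, cQ + Q^⊥]]`. -/
def Uop (ξ : h) (t : ℝ) : hilHat h →L[ℂ] hilHat h :=
  blk ((Real.sqrt (1 - t * ‖ξ‖ ^ 2) : ℝ) : ℂ)
    (-((Real.sqrt t : ℂ) • (innerSL ℂ ξ)))
    ((Real.sqrt t : ℂ) • ContinuousLinearMap.toSpanSingleton ℂ ξ)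
    (((Real.sqrt (1 - t * ‖ξ‖ ^ 2) : ℝ) : ℂ) • Qproj ξ +
      (ContinuousLinearMap.id ℂ h - Qproj ξ))

/-- The rank-one operator `X = |ξ⟩⟨ξ|`. -/
def Xop (ξ : h) : h →L[ℂ] h := (innerSL ℂ ξ).smulRight ξ

/-- The scaling operator `S_t = diag(t^{−1/2}, I_h)` on `ℂ ⊕ h`. -/
def Sop (t : ℝ) : hilHat h →L[ℂ] hilHat h :=
  blk (((Real.sqrt t)⁻¹ : ℝ) : ℂ) 0 0 (ContinuousLinearMap.id ℂ h)

variable {A : Type*} [NonUnitalNormedRing A] [StarRing A] [CStarRing A]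
  [NormedSpace ℂ A] [IsScalarTower ℂ A A] [SMulCommClass ℂ A A] [StarModule ℂ A]

/-- `ν = π − χ(·)I_h`. -/
def nuMap (π : A →⋆ₙₐ[ℂ] (h →L[ℂ] h)) (χ : A →⋆ₙₐ[ℂ] ℂ) (a : A) : h →L[ℂ] h :=
  π a - χ a • ContinuousLinearMap.id ℂ h

/-- `γ = ω_ξ ∘ ν`. -/
def gammaF (π : A →⋆ₙₐ[ℂ] (h →L[ℂ] h)) (χ : A →⋆ₙₐ[ℂ] ℂ) (ξ : h) (a : A) : ℂ :=
  inner ℂ ξ (nuMap π χ a ξ)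

/-- The implemented block map `φ = [[γ, ⟨ξ|ν(·)],[ν(·)|ξ⟩, ν]]`. -/
def phiMap (π : A →⋆ₙₐ[ℂ] (h →L[ℂ] h)) (χ : A →⋆ₙₐ[ℂ] ℂ) (ξ : h) (a : A) :
    hilHat h →L[ℂ] hilHat h :=
  blk (gammaF π χ ξ a) ((innerSL ℂ ξ) ∘L nuMap π χ a)
    (ContinuousLinearMap.toSpanSingleton ℂ (nuMap π χ a ξ)) (nuMap π χ a)

/-- `φ₁ = [[0, γ(·)⟨ξ|],[γ(·)|ξ⟩, Xν(·)+ν(·)X]]`. -/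
def phi1 (π : A →⋆ₙₐ[ℂ] (h →L[ℂ] h)) (χ : A →⋆ₙₐ[ℂ] ℂ) (ξ : h) (a : A) :
    hilHat h →L[ℂ] hilHat h :=
  blk 0 (gammaF π χ ξ a • innerSL ℂ ξ)
    (gammaF π χ ξ a • ContinuousLinearMap.toSpanSingleton ℂ ξ)
    (Xop ξ ∘L nuMap π χ a + nuMap π χ a ∘L Xop ξ)

/-- `φ₂ = γ(·)(0 ⊕ X)`. -/
def phi2 (π : A →⋆ₙₐ[ℂ] (h →L[ℂ] h)) (χ : A →⋆ₙₐ[ℂ] ℂ) (ξ : h) (a : A) :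
    hilHat h →L[ℂ] hilHat h :=
  blk 0 0 0 (gammaF π χ ξ a • Xop ξ)

/-- `ψ^{(t)} = U* (χ ⊕ π)(·) U`. -/
def psiH (π : A →⋆ₙₐ[ℂ] (h →L[ℂ] h)) (χ : A →⋆ₙₐ[ℂ] ℂ) (ξ : h) (t : ℝ) (a : A) :
    hilHat h →L[ℂ] hilHat h :=
  star (Uop ξ t) ∘L blk (χ a) 0 0 (π a) ∘L Uop ξ t

/-!
Put `c = √(1 - t‖ξ‖²)`, `κ = t / (1 + c)` and `D = 1 - κ X`. Since `(1 - c)(1 + c) = t‖ξ‖²`,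
the lower-right block `c Q_ξ + Q_ξ^⊥` of `U` equals `D`, and `U` is an isometry, so
`ψ(a) - χ(a) I = U* (0 ⊕ ν(a)) U`. As `S_t` is self-adjoint, `Σ_t(U* B U) = V* B V` with
`V = U S_t = [[c/√t, -√t⟨ξ|], [|ξ⟩, D]]`, and compressing `0 ⊕ ν(a)` by `V` gives
`[[γ(a), ⟨ξ|ν(a) D], [D ν(a)|ξ⟩, D ν(a) D]]`. Expanding `D` and using `X ν(a) X = γ(a) X`
leaves exactly `κ φ₁(a) - κ² φ₂(a)`.
-/

lemma div_one_add_sqrt_mul {t m : ℝ} (h : t * m ≤ 1) :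
    t / (1 + √(1 - t * m)) * m = 1 - √(1 - t * m) := by
  have hpos : 0 < 1 + √(1 - t * m) := by positivity
  have hsq : √(1 - t * m) ^ 2 = 1 - t * m := Real.sq_sqrt (by linarith)
  field_simp
  nlinarith

section

variable {E : Type*} [NormedAddCommGroup E] [InnerProductSpace ℂ E]

@[ext]
lemma hilHat_ext {x y : hilHat E} (h₁ : x.fst = y.fst) (h₂ : x.snd = y.snd) : x = y :=
  WithLp.ofLp_injective 2 (Prod.ext h₁ h₂)

@[simp]
lemma blk_apply_fst (a : ℂ) (r : E →L[ℂ] ℂ) (c : ℂ →L[ℂ] E) (d : E →L[ℂ] E) (x : hilHat E) :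
    (blk a r c d x).fst = a * x.fst + r x.snd := rfl

@[simp]
lemma blk_apply_snd (a : ℂ) (r : E →L[ℂ] ℂ) (c : ℂ →L[ℂ] E) (d : E →L[ℂ] E) (x : hilHat E) :
    (blk a r c d x).snd = c x.fst + d x.snd := rfl

lemma one_eq_blk : (1 : hilHat E →L[ℂ] hilHat E) = blk 1 0 0 1 := by
  ext x <;> simp

lemma blk_sub (a a' : ℂ) (r r' : E →L[ℂ] ℂ) (c c' : ℂ →L[ℂ] E) (d d' : E →L[ℂ] E) :
    blk a r c d - blk a' r' c' d' = blk (a - a') (r - r') (c - c') (d - d') := by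
  ext x
  · simp only [sub_apply, blk_apply_fst, WithLp.sub_fst]; ring
  · simp only [sub_apply, blk_apply_snd, WithLp.sub_snd]; abel

lemma smul_blk (z a : ℂ) (r : E →L[ℂ] ℂ) (c : ℂ →L[ℂ] E) (d : E →L[ℂ] E) :
    z • blk a r c d = blk (z * a) (z • r) (z • c) (z • d) := by
  ext x
  · simp; ring
  · simp

lemma blk_comp_blk (a a' : ℂ) (r r' : E →L[ℂ] ℂ) (c c' : ℂ →L[ℂ] E) (d d' : E →L[ℂ] E) :
    blk a r c d ∘L blk a' r' c' d' =
      blk (a * a' + r (c' 1)) (a • r' + r ∘L d') (a' • c + d ∘L c') (c ∘L r' + d ∘L d') := by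
  ext x
  · have hc' : c' x.fst = x.fst • c' 1 := by rw [← map_smul, smul_eq_mul, mul_one]
    simp [hc']; ring
  · have hc : c (a' * x.fst) = a' • c x.fst := by rw [← map_smul, smul_eq_mul]
    simp [hc]
    abel

lemma Qproj_eq_smul_Xop (ξ : E) : Qproj ξ = (((‖ξ‖ ^ 2)⁻¹ : ℝ) : ℂ) • Xop ξ := by
  ext x
  simp [Qproj, Xop, xiNorm, RCLike.real_smul_eq_coe_smul (K := ℂ), smul_smul]
  ring_nf

@[simp]
lemma Xop_apply (ξ x : E) : Xop ξ x = inner ℂ ξ x • ξ := rfl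

/-- `U_ξ^{(t)}` with its lower-right block `c Q_ξ + Q_ξ^⊥` written as `1 - κ X`. -/
def blkRot (ξ : E) (c s κ : ℝ) : hilHat E →L[ℂ] hilHat E :=
  blk c (-((s : ℂ) • innerSL ℂ ξ)) ((s : ℂ) • toSpanSingleton ℂ ξ) (1 - (κ : ℂ) • Xop ξ)

lemma Uop_eq_blkRot {ξ : E} {t : ℝ} (hξ : t * ‖ξ‖ ^ 2 ≤ 1) :
    Uop ξ t = blkRot ξ (√(1 - t * ‖ξ‖ ^ 2)) (√t) (t / (1 + √(1 - t * ‖ξ‖ ^ 2))) := by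
  rw [Uop, blkRot]
  congr 1
  rcases eq_or_ne ξ 0 with rfl | hξ₀
  · ext x
    simp [Qproj, Xop, xiNorm]
  · have hn : ‖ξ‖ ^ 2 ≠ 0 := by positivity
    have hκ : t / (1 + √(1 - t * ‖ξ‖ ^ 2)) = (1 - √(1 - t * ‖ξ‖ ^ 2)) * (‖ξ‖ ^ 2)⁻¹ := by
      rw [eq_mul_inv_iff_mul_eq₀ hn, div_one_add_sqrt_mul hξ]
    rw [Qproj_eq_smul_Xop, hκ, ← one_def]
    push_cast
    module

lemma blkRot_comp_Sop (ξ : E) (c κ : ℝ) {t : ℝ} (ht : 0 < t) :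
    blkRot ξ c (√t) κ ∘L Sop t =
      blk (c / √t) (-((√t : ℂ) • innerSL ℂ ξ)) (toSpanSingleton ℂ ξ) (1 - (κ : ℂ) • Xop ξ) := by
  have hs : (√t : ℂ) ≠ 0 := by exact_mod_cast (Real.sqrt_pos.mpr ht).ne'
  rw [blkRot, Sop, blk_comp_blk]
  congr 1
  · simp [div_eq_mul_inv]
  · ext; simp
  · ext
    simp
    rw [← Complex.coe_smul, smul_smul, inv_mul_cancel₀ hs, one_smul]
  · ext; simp

lemma blk_sub_blk_one_sub_smul_Xop (ξ : E) (T : E →L[ℂ] E) (κ : ℂ) :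
    blk (inner ℂ ξ (T ξ)) (innerSL ℂ ξ ∘L T) (toSpanSingleton ℂ (T ξ)) T -
        blk (inner ℂ ξ (T ξ)) (innerSL ℂ ξ ∘L T ∘L (1 - κ • Xop ξ))
          ((1 - κ • Xop ξ) ∘L T ∘L toSpanSingleton ℂ ξ)
          ((1 - κ • Xop ξ) ∘L T ∘L (1 - κ • Xop ξ)) =
      κ • blk 0 (inner ℂ ξ (T ξ) • innerSL ℂ ξ) (inner ℂ ξ (T ξ) • toSpanSingleton ℂ ξ)
          (Xop ξ ∘L T + T ∘L Xop ξ) -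
        κ ^ 2 • blk 0 0 0 (inner ℂ ξ (T ξ) • Xop ξ) := by
  rw [blk_sub, smul_blk, smul_blk, blk_sub]
  congr 1
  · simp
  · ext x
    simp [mul_comm]
  · ext
    simp
  · ext x
    simp
    module

variable [CompleteSpace E]

lemma star_blk (a : ℂ) (r : E →L[ℂ] ℂ) (c : ℂ →L[ℂ] E) (d : E →L[ℂ] E) :
    star (blk a r c d) = blk (star a) (adjoint c) (adjoint r) (adjoint d) := by
  rw [star_eq_adjoint, eq_comm, eq_adjoint_iff]
  intro x y
  have hc : inner ℂ x.snd (c y.fst) = y.fst * star (adjoint c x.snd) := by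
    rw [← adjoint_inner_left]; simp
  simp [WithLp.prod_inner_apply, inner_add_left, inner_add_right, adjoint_inner_left, hc]
  ring

lemma star_blk_comp_blk_zero_comp_blk (a : ℂ) (r : E →L[ℂ] ℂ) (c : ℂ →L[ℂ] E)
    (d T : E →L[ℂ] E) :
    star (blk a r c d) ∘L blk 0 0 0 T ∘L blk a r c d =
      blk (adjoint c (T (c 1))) (adjoint c ∘L T ∘L d) (adjoint d ∘L T ∘L c)
        (adjoint d ∘L T ∘L d) := by
  -- `simp` cannot apply `zero_smul`/`smul_zero` here: the scalar action on `E →L[ℂ] ℂ`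
  -- elaborated in `blk_comp_blk` is not reducibly the one these lemmas expect.
  have h₀ : (0 : ℂ) • r = 0 := @zero_smul ℂ (E →L[ℂ] ℂ) _ _ _ r
  have h₁ : starRingEnd ℂ a • (0 : E →L[ℂ] ℂ) = 0 := @smul_zero ℂ (E →L[ℂ] ℂ) _ _ _
  simp [star_blk, blk_comp_blk, h₀, h₁]

lemma star_comp_blk_comp_sub_smul_one {U : hilHat E →L[ℂ] hilHat E} (hU : star U ∘L U = 1)
    (z : ℂ) (P : E →L[ℂ] E) :
    star U ∘L blk z 0 0 P ∘L U - z • 1 =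
      star U ∘L blk 0 0 0 (P - z • ContinuousLinearMap.id ℂ E) ∘L U := by
  have hsplit : blk z 0 0 P = z • 1 + blk 0 0 0 (P - z • ContinuousLinearMap.id ℂ E) := by
    ext x <;> simp
  simp only [← mul_def] at hU ⊢
  rw [hsplit, add_mul, mul_add, smul_mul_assoc, one_mul, mul_smul_comm, hU, add_sub_cancel_left]

lemma Xop_adjoint (ξ : E) : adjoint (Xop ξ) = Xop ξ :=
  InnerProductSpace.adjoint_rankOne ξ ξ

lemma adjoint_one_sub_smul_Xop (ξ : E) (κ : ℝ) :
    adjoint (1 - (κ : ℂ) • Xop ξ) = 1 - (κ : ℂ) • Xop ξ := by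
  simp only [map_sub, map_smulₛₗ, adjoint_one, Xop_adjoint, Complex.conj_ofReal]

lemma star_blkRot (ξ : E) (c s κ : ℝ) :
    star (blkRot ξ c s κ) =
      blk c ((s : ℂ) • innerSL ℂ ξ) (-((s : ℂ) • toSpanSingleton ℂ ξ)) (1 - (κ : ℂ) • Xop ξ) := by
  simp only [blkRot, star_blk, map_neg, map_smulₛₗ, adjoint_toSpanSingleton,
    adjoint_innerSL_apply, adjoint_one_sub_smul_Xop, Complex.conj_ofReal, RCLike.star_def]

lemma star_blkRot_comp_blkRot (ξ : E) {c s κ : ℝ} (hcs : c ^ 2 + s ^ 2 * ‖ξ‖ ^ 2 = 1)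
    (hκξ : κ * ‖ξ‖ ^ 2 = 1 - c) (hκc : κ * (1 + c) = s ^ 2) :
    star (blkRot ξ c s κ) ∘L blkRot ξ c s κ = 1 := by
  have hcsℂ : (c : ℂ) ^ 2 + (s : ℂ) ^ 2 * (‖ξ‖ : ℂ) ^ 2 = 1 := by exact_mod_cast hcs
  have hκξℂ : (κ : ℂ) * (‖ξ‖ : ℂ) ^ 2 = 1 - c := by exact_mod_cast hκξ
  have hκcℂ : (κ : ℂ) * (1 + c) = s ^ 2 := by exact_mod_cast hκc
  rw [star_blkRot, blkRot, blk_comp_blk, one_eq_blk]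
  congr 1
  · simp
    linear_combination hcsℂ
  · ext x
    simp [inner_self_eq_norm_sq_to_K]
    linear_combination (-s * inner ℂ ξ x) * hκξℂ
  · ext
    simp [inner_self_eq_norm_sq_to_K]
    linear_combination (norm := module) (-(s : ℂ) * hκξℂ) • ξ
  · ext x
    simp [inner_self_eq_norm_sq_to_K]
    linear_combination (norm := module) (κ * inner ℂ ξ x * hκξℂ - inner ℂ ξ x * hκcℂ) • ξ

lemma star_Uop_comp_Uop {ξ : E} {t : ℝ} (ht : 0 ≤ t) (hξ : t * ‖ξ‖ ^ 2 ≤ 1) :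
    star (Uop ξ t) ∘L Uop ξ t = 1 := by
  have hc : √(1 - t * ‖ξ‖ ^ 2) ^ 2 = 1 - t * ‖ξ‖ ^ 2 := Real.sq_sqrt (by linarith)
  have hs : √t ^ 2 = t := Real.sq_sqrt ht
  rw [Uop_eq_blkRot hξ]
  refine star_blkRot_comp_blkRot ξ (by rw [hc, hs]; ring) (div_one_add_sqrt_mul hξ) ?_
  rw [hs, div_mul_cancel₀]
  positivity

lemma star_Sop (t : ℝ) : star (Sop t : hilHat E →L[ℂ] hilHat E) = Sop t := by
  simp [Sop, star_blk, adjoint_id]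

end

theorem stmt15_general (χ : A →⋆ₙₐ[ℂ] ℂ)
    (π : A →⋆ₙₐ[ℂ] (h →L[ℂ] h)) (ξ : h)
    (t : ℝ) (ht : 0 < t) (hξ : t * ‖ξ‖ ^ 2 ≤ 1) :
    ∀ a : A,
      phiMap π χ ξ a -
        Sop t ∘L (psiH π χ ξ t a - χ a • (1 : hilHat h →L[ℂ] hilHat h)) ∘L Sop t =
      ((t / (1 + Real.sqrt (1 - t * ‖ξ‖ ^ 2)) : ℝ) : ℂ) • phi1 π χ ξ a -
      ((t ^ 2 / (1 + Real.sqrt (1 - t * ‖ξ‖ ^ 2)) ^ 2 : ℝ) : ℂ) • phi2 π χ ξ a := by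
  intro a
  have hconj : Sop t ∘L (psiH π χ ξ t a - χ a • 1) ∘L Sop t =
      star (Uop ξ t ∘L Sop t) ∘L blk 0 0 0 (nuMap π χ a) ∘L (Uop ξ t ∘L Sop t) := by
    rw [psiH, star_comp_blk_comp_sub_smul_one (star_Uop_comp_Uop ht.le hξ)]
    simp only [← mul_def, star_mul, star_Sop, mul_assoc]
    rfl
  have hκ₂ : ((t ^ 2 / (1 + √(1 - t * ‖ξ‖ ^ 2)) ^ 2 : ℝ) : ℂ) =
      ((t / (1 + √(1 - t * ‖ξ‖ ^ 2)) : ℝ) : ℂ) ^ 2 := by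
    push_cast; rw [div_pow]
  rw [hconj, Uop_eq_blkRot hξ, blkRot_comp_Sop _ _ _ ht, star_blk_comp_blk_zero_comp_blk,
    hκ₂, adjoint_toSpanSingleton, adjoint_one_sub_smul_Xop]
  simp only [phiMap, phi1, phi2, gammaF, toSpanSingleton_apply, one_smul, innerSL_apply_apply]
  exact blk_sub_blk_one_sub_smul_Xop ξ (nuMap π χ a) _

/-- With `ψ^{(t)}(a) = U*(χ(a) ⊕ π(a))U`, `Σ_t` conjugation by the
scaling `S_t = diag(t^{−1/2}, I)`, `φ` the implemented block map, `φ₁`, `φ₂` the fixed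
completely bounded maps above, and `c_t = √(1 − t‖ξ‖²)`, the exact identity
`φ − Σ_t(ψ^{(t)} − χ(·)I) = (t/(1+c_t)) φ₁ − (t²/(1+c_t)²) φ₂` holds. -/
theorem stmt15 (χ : A →⋆ₙₐ[ℂ] ℂ) (hχ : χ ≠ 0)
    (π : A →⋆ₙₐ[ℂ] (h →L[ℂ] h)) (ξ : h)
    (t : ℝ) (ht : 0 < t) (hξ : t * ‖ξ‖ ^ 2 ≤ 1) :
    ∀ a : A,
      phiMap π χ ξ a -
        Sop t ∘L (psiH π χ ξ t a - χ a • (1 : hilHat h →L[ℂ] hilHat h)) ∘L Sop t =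
      ((t / (1 + Real.sqrt (1 - t * ‖ξ‖ ^ 2)) : ℝ) : ℂ) • phi1 π χ ξ a -
      ((t ^ 2 / (1 + Real.sqrt (1 - t * ‖ξ‖ ^ 2)) ^ 2 : ℝ) : ℂ) • phi2 π χ ξ a :=
  stmt15_general χ π ξ t ht hξ
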